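/- arXiv:1208.5529 — 3 statements merged into one kernel-verified Lean document; each statement's English description precedes it below -/
import Mathlib

section
/- If x ∈ C²([a,b],ℝ) is a minimizer of the functional J[x] = ∫_a^b L(t, x(t), ẋ(t)) dt among all functions in C²([a,b],ℝ) satisfying x(a) = A and x(b) = B, then x satisfies the DuBois–Reymond condition: ∂L/∂t (t, x(t), ẋ(t)) = d/dt { L(t, x(t), ẋ(t)) − ∂L/∂ẋ (t, x(t), ẋ(t)) · ẋ(t) } for all t ∈ [a,b]. -/
/-!
Differentiating `ε ↦ J[x + εη]` under the integral sign at `ε = 0`, minimality gives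
`∫ (L_x η + L_v η') = 0` for every `η` vanishing at `a` and `b`. Integrating by parts and applying
the fundamental lemma of the calculus of variations yields the Euler–Lagrange equation
`d/dt L_v = L_x` along `x`, on all of `[a, b]` by continuity. The DuBois–Reymond condition is then
the chain rule: `d/dt (L - L_v ẋ) = L_t + L_x ẋ + L_v ẍ - (d/dt L_v) ẋ - L_v ẍ = L_t`.
-/

open Set MeasureTheory Function
open scoped ContDiff Interval

theorem ContinuousLinearMap.apply_prodMk_prodMk (ℓ : ℝ × ℝ × ℝ →L[ℝ] ℝ) (p q r : ℝ) :
    ℓ (p, q, r) = p * ℓ (1, 0, 0) + q * ℓ (0, 1, 0) + r * ℓ (0, 0, 1) := by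
  have hsplit : ((p, q, r) : ℝ × ℝ × ℝ) = p • (1, 0, 0) + q • (0, 1, 0) + r • (0, 0, 1) := by
    simp
  rw [hsplit, map_add, map_add, map_smul, map_smul, map_smul, smul_eq_mul, smul_eq_mul,
    smul_eq_mul]

theorem eqOn_zero_of_forall_integral_mul_eq_zero {a b : ℝ} (hab : a < b) {h : ℝ → ℝ}
    (hh : ContinuousOn h (Icc a b))
    (H : ∀ η : ℝ → ℝ, ContDiff ℝ ∞ η → HasCompactSupport η → tsupport η ⊆ Ioo a b →
      ∫ t in a..b, h t * η t = 0) :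
    EqOn h 0 (Icc a b) := by
  have hae : ∀ᵐ t, t ∈ Ioo a b → h t = 0 := by
    refine isOpen_Ioo.ae_eq_zero_of_integral_contDiff_smul_eq_zero
      ((hh.mono Ioo_subset_Icc_self).locallyIntegrableOn measurableSet_Ioo) fun η hη hηc hηU => ?_
    have hvanish : ∀ t ∉ Ioc a b, η t • h t = 0 := fun t ht => by
      rw [image_eq_zero_of_notMem_tsupport fun h' => ht (Ioo_subset_Ioc_self (hηU h')),
        zero_smul]
    rw [← setIntegral_eq_integral_of_forall_compl_eq_zero hvanish,
      ← intervalIntegral.integral_of_le hab.le]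
    simpa only [smul_eq_mul, mul_comm] using H η hη hηc hηU
  refine Measure.eqOn_of_ae_eq (μ := volume) ?_ hh continuousOn_const
    (by simp [closure_Ioo hab.ne])
  rwa [Filter.EventuallyEq, ae_restrict_congr_set Ioo_ae_eq_Icc.symm,
    ae_restrict_iff' measurableSet_Ioo]

theorem hasDerivAt_integral_comp_add_smul {E : Type*} [NormedAddCommGroup E] [NormedSpace ℝ E]
    {F : E → ℝ} (hF : ContDiff ℝ 1 F) {a b : ℝ} {c w : ℝ → E}
    (hc : ContinuousOn c [[a, b]]) (hw : ContinuousOn w [[a, b]]) :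
    HasDerivAt (fun ε : ℝ => ∫ t in a..b, F (c t + ε • w t))
      (∫ t in a..b, fderiv ℝ F (c t) (w t)) 0 := by
  have hw₂ : ContinuousOn (fun q : ℝ × ℝ => w q.2) (univ ×ˢ [[a, b]]) :=
    hw.comp continuousOn_snd fun q hq => hq.2
  have hpath : ContinuousOn (fun q : ℝ × ℝ => c q.2 + q.1 • w q.2) (univ ×ˢ [[a, b]]) :=
    (hc.comp continuousOn_snd fun q hq => hq.2).add (continuousOn_fst.smul hw₂)
  have hF' : ContinuousOn (fun q : ℝ × ℝ => fderiv ℝ F (c q.2 + q.1 • w q.2) (w q.2))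
      (univ ×ˢ [[a, b]]) :=
    ((hF.continuous_fderiv one_ne_zero).comp_continuousOn hpath).clm_apply hw₂
  have hslice : ∀ {g : ℝ × ℝ → ℝ}, ContinuousOn g (univ ×ˢ [[a, b]]) → ∀ ε : ℝ,
      AEStronglyMeasurable (fun t => g (ε, t)) (volume.restrict (Ι a b)) := fun hg ε =>
    ((hg.comp (continuousOn_const.prodMk continuousOn_id) fun t ht => ⟨mem_univ ε, ht⟩).mono
      uIoc_subset_uIcc).aestronglyMeasurable measurableSet_uIoc
  obtain ⟨M, hM⟩ := ((isCompact_closedBall (0 : ℝ) 1).prod isCompact_uIcc)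
    |>.exists_bound_of_continuousOn (hF'.mono (prod_mono (subset_univ _) le_rfl))
  have hderiv := intervalIntegral.hasDerivAt_integral_of_dominated_loc_of_deriv_le
    (F' := fun ε t => fderiv ℝ F (c t + ε • w t) (w t)) (bound := fun _ => M)
    (Metric.ball_mem_nhds (0 : ℝ) one_pos)
    (Filter.Eventually.of_forall (hslice (hF.continuous.comp_continuousOn hpath)))
    (by simpa [comp_def] using (hF.continuous.comp_continuousOn hc).intervalIntegrable)
    (hslice hF' 0)
    (Filter.Eventually.of_forall fun t ht ε hε =>
      hM (ε, t) ⟨Metric.ball_subset_closedBall hε, uIoc_subset_uIcc ht⟩)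
    intervalIntegrable_const
    (Filter.Eventually.of_forall fun t _ ε _ =>
      ((hF.differentiable one_ne_zero) _).hasFDerivAt.comp_hasDerivAt ε
        (by simpa using ((hasDerivAt_id ε).smul_const (w t)).const_add (c t)))
  simpa using hderiv.2

noncomputable def action (L : ℝ → ℝ → ℝ → ℝ) (a b : ℝ) (y : ℝ → ℝ) : ℝ :=
  ∫ t in a..b, L t (y t) (derivWithin y (Icc a b) t)

def IsActionMinimizer (L : ℝ → ℝ → ℝ → ℝ) (a b : ℝ) (x : ℝ → ℝ) : Prop :=
  ∀ y, ContDiffOn ℝ 2 y (Icc a b) → y a = x a → y b = x b → action L a b x ≤ action L a b y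

section Lagrangian

variable {L : ℝ → ℝ → ℝ → ℝ} {a b : ℝ} {x : ℝ → ℝ}

theorem deriv_fst_eq_fderiv_uncurry {t y v : ℝ} (hL : DifferentiableAt ℝ ↿L (t, y, v)) :
    deriv (fun s => L s y v) t = fderiv ℝ ↿L (t, y, v) (1, 0, 0) :=
  HasDerivAt.deriv (f := fun s => ↿L (s, y, v)) (hL.hasFDerivAt.comp_hasDerivAt t
    ((hasDerivAt_id' t).prodMk ((hasDerivAt_const t y).prodMk (hasDerivAt_const t v))))

theorem deriv_thd_eq_fderiv_uncurry {t y v : ℝ} (hL : DifferentiableAt ℝ ↿L (t, y, v)) :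
    deriv (fun w => L t y w) v = fderiv ℝ ↿L (t, y, v) (0, 0, 1) :=
  HasDerivAt.deriv (f := fun w => ↿L (t, y, w)) (hL.hasFDerivAt.comp_hasDerivAt v
    ((hasDerivAt_const v t).prodMk ((hasDerivAt_const v y).prodMk (hasDerivAt_id' v))))

theorem action_add_smul_eq (hab : a < b) (hx : DifferentiableOn ℝ x (Icc a b)) {η : ℝ → ℝ}
    (hη : Differentiable ℝ η) (ε : ℝ) :
    action L a b (x + ε • η)
      = ∫ t in a..b, ↿L ((t, x t, derivWithin x (Icc a b) t) + ε • (0, η t, deriv η t)) := by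
  refine intervalIntegral.integral_congr fun t ht => ?_
  rw [uIcc_of_le hab.le] at ht
  have hderiv :
      derivWithin (x + ε • η) (Icc a b) t = derivWithin x (Icc a b) t + ε * deriv η t :=
    ((hx t ht).hasDerivWithinAt.add ((hη t).hasDerivAt.hasDerivWithinAt.const_smul ε))
      |>.derivWithin (uniqueDiffOn_Icc hab t ht)
  simp only [hderiv, Pi.add_apply, Pi.smul_apply, smul_eq_mul, Prod.smul_mk, Prod.mk_add_mk,
    mul_zero, add_zero]
  rfl

theorem IsActionMinimizer.first_variation_eq_zero (hmin : IsActionMinimizer L a b x)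
    (hab : a < b) (hL : ContDiff ℝ 1 ↿L) (hx : ContDiffOn ℝ 2 x (Icc a b))
    {η : ℝ → ℝ} (hη : ContDiff ℝ 2 η) (hηa : η a = 0) (hηb : η b = 0) :
    ∫ t in a..b, fderiv ℝ ↿L (t, x t, derivWithin x (Icc a b) t) (0, η t, deriv η t) = 0 := by
  have hx' : ContinuousOn (derivWithin x (Icc a b)) (Icc a b) :=
    hx.continuousOn_derivWithin (uniqueDiffOn_Icc hab) one_le_two
  have hvar := hasDerivAt_integral_comp_add_smul hL
    (c := fun t => (t, x t, derivWithin x (Icc a b) t)) (w := fun t => (0, η t, deriv η t))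
    (by rw [uIcc_of_le hab.le]; exact continuousOn_id.prodMk (hx.continuousOn.prodMk hx'))
    (continuousOn_const.prodMk
      (hη.continuous.prodMk (hη.continuous_deriv one_le_two)).continuousOn)
  refine IsLocalMin.hasDerivAt_eq_zero (Filter.Eventually.of_forall fun ε => ?_) hvar
  simp only [← action_add_smul_eq hab (hx.differentiableOn two_ne_zero)
    (hη.differentiable two_ne_zero)]
  simpa only [zero_smul, add_zero] using hmin (x + ε • η) (hx.add (hη.const_smul ε).contDiffOn)
    (by simp [hηa]) (by simp [hηb])

theorem IsActionMinimizer.euler_lagrange (hmin : IsActionMinimizer L a b x)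
    (hab : a < b) (hL : ContDiff ℝ 2 ↿L) (hx : ContDiffOn ℝ 2 x (Icc a b)) {t : ℝ}
    (ht : t ∈ Icc a b) :
    HasDerivWithinAt (fun s => fderiv ℝ ↿L (s, x s, derivWithin x (Icc a b) s) (0, 0, 1))
      (fderiv ℝ ↿L (t, x t, derivWithin x (Icc a b) t) (0, 1, 0)) (Icc a b) t := by
  set x' := derivWithin x (Icc a b)
  set g := fun s => fderiv ℝ ↿L (s, x s, x' s) (0, 0, 1)
  set Lx := fun s => fderiv ℝ ↿L (s, x s, x' s) (0, 1, 0)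
  have hγ : ContDiffOn ℝ 1 (fun s => (s, x s, x' s)) (Icc a b) :=
    contDiffOn_id.prodMk ((hx.of_le one_le_two).prodMk
      (hx.derivWithin (uniqueDiffOn_Icc hab) le_rfl))
  have hdL : ContDiff ℝ 1 (fderiv ℝ ↿L) := hL.fderiv_right le_rfl
  have hg : ContDiffOn ℝ 1 g (Icc a b) := (hdL.comp_contDiffOn hγ).clm_apply contDiffOn_const
  have hLx : ContinuousOn Lx (Icc a b) :=
    ((hdL.comp_contDiffOn hγ).clm_apply contDiffOn_const).continuousOn
  have hg' : ContinuousOn (derivWithin g (Icc a b)) (Icc a b) :=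
    hg.continuousOn_derivWithin (uniqueDiffOn_Icc hab) le_rfl
  suffices EqOn (fun s => Lx s - derivWithin g (Icc a b) s) 0 (Icc a b) by
    change HasDerivWithinAt g (Lx t) (Icc a b) t
    rw [sub_eq_zero.mp (this ht)]
    exact (hg.differentiableOn one_ne_zero t ht).hasDerivWithinAt
  refine eqOn_zero_of_forall_integral_mul_eq_zero hab (hLx.sub hg') fun η hη hηc hηU => ?_
  have hηa : η a = 0 := image_eq_zero_of_notMem_tsupport fun h => (hηU h).1.false
  have hηb : η b = 0 := image_eq_zero_of_notMem_tsupport fun h => (hηU h).2.false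
  have hvar : ∫ t in a..b, Lx t * η t + g t * deriv η t = 0 := by
    rw [← hmin.first_variation_eq_zero hab (hL.of_le one_le_two) hx
      (hη.of_le ENat.LEInfty.out) hηa hηb]
    refine intervalIntegral.integral_congr fun t _ => ?_
    rw [ContinuousLinearMap.apply_prodMk_prodMk]
    ring
  have hparts : ∫ t in a..b, derivWithin g (Icc a b) t * η t + g t * deriv η t = 0 := by
    rw [intervalIntegral.integral_deriv_mul_eq_sub_of_hasDerivWithinAt
      (fun t ht => by
        rw [uIcc_of_le hab.le] at ht ⊢
        exact (hg.differentiableOn one_ne_zero t ht).hasDerivWithinAt)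
      (fun t _ => (hη.differentiable (by simp) t).hasDerivAt.hasDerivWithinAt)
      (hg'.intervalIntegrable_of_Icc hab.le)
      ((hη.continuous_deriv (by simp)).intervalIntegrable _ _),
      hηa, hηb, mul_zero, mul_zero, sub_zero]
  have hη₀ : ContinuousOn η (Icc a b) := hη.continuous.continuousOn
  have hη₁ : ContinuousOn (deriv η) (Icc a b) := (hη.continuous_deriv (by simp)).continuousOn
  have hi₁ : IntervalIntegrable (fun t => Lx t * η t + g t * deriv η t) volume a b :=
    ((hLx.mul hη₀).add (hg.continuousOn.mul hη₁)).intervalIntegrable_of_Icc hab.le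
  have hi₂ : IntervalIntegrable (fun t => derivWithin g (Icc a b) t * η t + g t * deriv η t)
      volume a b :=
    ((hg'.mul hη₀).add (hg.continuousOn.mul hη₁)).intervalIntegrable_of_Icc hab.le
  calc ∫ t in a..b, (Lx t - derivWithin g (Icc a b) t) * η t
      = (∫ t in a..b, Lx t * η t + g t * deriv η t)
        - ∫ t in a..b, derivWithin g (Icc a b) t * η t + g t * deriv η t := by
        rw [← intervalIntegral.integral_sub hi₁ hi₂]
        exact intervalIntegral.integral_congr fun t _ => by ring
    _ = 0 := by rw [hvar, hparts, sub_zero]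

end Lagrangian

/-- **DuBois–Reymond necessary condition.**
If `x ∈ C²([a,b],ℝ)` minimizes `J[x] = ∫_a^b L(t, x(t), ẋ(t)) dt` among all
`C²` functions satisfying the boundary conditions `x(a) = A`, `x(b) = B`,
where `L` is `C²` in all its arguments, then `x` satisfies the
DuBois–Reymond condition
`∂L/∂t (t,x(t),ẋ(t)) = d/dt { L(t,x(t),ẋ(t)) - ∂L/∂ẋ (t,x(t),ẋ(t))·ẋ(t) }`
for all `t ∈ [a,b]`. -/
theorem duBois_reymond_condition
    (a b A B : ℝ) (hab : a < b)
    (L : ℝ → ℝ → ℝ → ℝ)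
    (hL : ContDiff ℝ 2 (fun p : ℝ × ℝ × ℝ => L p.1 p.2.1 p.2.2))
    (x : ℝ → ℝ) (hx : ContDiffOn ℝ 2 x (Set.Icc a b))
    (hxa : x a = A) (hxb : x b = B)
    (hmin : ∀ y : ℝ → ℝ, ContDiffOn ℝ 2 y (Set.Icc a b) → y a = A → y b = B →
      (∫ t in a..b, L t (x t) (derivWithin x (Set.Icc a b) t))
        ≤ ∫ t in a..b, L t (y t) (derivWithin y (Set.Icc a b) t)) :
    ∀ t ∈ Set.Icc a b,
      deriv (fun s => L s (x t) (derivWithin x (Set.Icc a b) t)) t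
        = derivWithin
            (fun s => L s (x s) (derivWithin x (Set.Icc a b) s)
              - deriv (fun v => L s (x s) v) (derivWithin x (Set.Icc a b) s)
                  * derivWithin x (Set.Icc a b) s)
            (Set.Icc a b) t := by
  have hmin' : IsActionMinimizer L a b x := fun y hy hya hyb =>
    hmin y hy (hya.trans hxa) (hyb.trans hxb)
  intro t ht
  have hEL := hmin'.euler_lagrange hab hL hx ht
  set x' := derivWithin x (Icc a b)
  have hdiff : Differentiable ℝ ↿L := hL.differentiable two_ne_zero
  have hx' : HasDerivWithinAt x' (derivWithin x' (Icc a b) t) (Icc a b) t :=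
    ((hx.derivWithin (uniqueDiffOn_Icc hab) le_rfl).differentiableOn one_ne_zero t ht)
      |>.hasDerivWithinAt
  have hγ : HasDerivWithinAt (fun s => (s, x s, x' s)) (1, x' t, derivWithin x' (Icc a b) t)
      (Icc a b) t :=
    (hasDerivWithinAt_id t _).prodMk
      (((hx.differentiableOn two_ne_zero) t ht).hasDerivWithinAt.prodMk hx')
  have hLγ : HasDerivWithinAt (fun s => ↿L (s, x s, x' s))
      (fderiv ℝ ↿L (t, x t, x' t) (1, x' t, derivWithin x' (Icc a b) t)) (Icc a b) t :=
    (hdiff _).hasFDerivAt.comp_hasDerivWithinAt t hγ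
  have hslice : (fun s => L s (x s) (x' s) - deriv (fun v => L s (x s) v) (x' s) * x' s)
      = fun s => ↿L (s, x s, x' s) - fderiv ℝ ↿L (s, x s, x' s) (0, 0, 1) * x' s :=
    funext fun s => by rw [deriv_thd_eq_fderiv_uncurry (hdiff _)]; rfl
  rw [hslice, ((hLγ.fun_sub (hEL.fun_mul hx')).derivWithin (uniqueDiffOn_Icc hab t ht)),
    deriv_fst_eq_fderiv_uncurry (hdiff _),
    ContinuousLinearMap.apply_prodMk_prodMk _ 1 (x' t)]
  ring
end

section
/- Suppose the functional J[x] = ∫_a^b L(t, x(t), ẋ(t)) dt is invariant under the one-parameter family of infinitesimal transformations with C¹ generators T and X. Then, along every x ∈ C²([a,b],ℝ) satisfying the Euler–Lagrange equation L_x(t,x(t),ẋ(t)) = d/dt [L_ẋ(t,x(t),ẋ(t))], the quantity ∂L/∂ẋ (t, x(t), ẋ(t)) · X(t, x(t)) + ( L(t, x(t), ẋ(t)) − ∂L/∂ẋ (t, x(t), ẋ(t)) · ẋ(t) ) · T(t, x(t)) is constant on [a,b] (Noether's theorem: invariance yields a conservation law). -/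
/-!
Invariance over every subinterval forces the transformed Lagrangian to agree pointwise with the
original one, both integrands being continuous. Differentiating that pointwise identity in `ε` at
`ε = 0` gives the Rund–Trautman identity
`L_t T + L_x X + L_ẋ (Ẋ - ẋ Ṫ) + L Ṫ = 0`,
where `Ṫ` and `Ẋ` are the total derivatives of `T(t, x(t))` and `X(t, x(t))`: the `ε`-derivative
of `d/dt Φ(t, x(t), ε)` is `Ṫ` by symmetry of second derivatives. Along an extremal, the
Euler–Lagrange equation turns the time derivative of the Noether charge
`L_ẋ X + (L - L_ẋ ẋ) T` into the left-hand side of this identity, so the charge has zero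
derivative inside `[a, b]` and, being continuous on `[a, b]`, is constant there.
-/

open Set Filter Topology Function

theorem ContinuousLinearMap.map_triple (D : ℝ × ℝ × ℝ →L[ℝ] ℝ) (d₁ d₂ d₃ : ℝ) :
    D (d₁, d₂, d₃) = d₁ * D (1, 0, 0) + d₂ * D (0, 1, 0) + d₃ * D (0, 0, 1) := by
  have h : ((d₁, d₂, d₃) : ℝ × ℝ × ℝ) = d₁ • (1, 0, 0) + d₂ • (0, 1, 0) + d₃ • (0, 0, 1) := by
    simp
  rw [h, map_add, map_add, map_smul, map_smul, map_smul, smul_eq_mul, smul_eq_mul, smul_eq_mul]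

theorem hasDerivAt_uncurry₃_comp {F : ℝ → ℝ → ℝ → ℝ} {γ₁ γ₂ γ₃ : ℝ → ℝ} {d₁ d₂ d₃ t : ℝ}
    (hF : DifferentiableAt ℝ ↿F (γ₁ t, γ₂ t, γ₃ t))
    (h₁ : HasDerivAt γ₁ d₁ t) (h₂ : HasDerivAt γ₂ d₂ t) (h₃ : HasDerivAt γ₃ d₃ t) :
    HasDerivAt (fun s => F (γ₁ s) (γ₂ s) (γ₃ s))
      (fderiv ℝ ↿F (γ₁ t, γ₂ t, γ₃ t) (d₁, d₂, d₃)) t :=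
  HasFDerivAt.comp_hasDerivAt (l := ↿F) t hF.hasFDerivAt (h₁.prodMk (h₂.prodMk h₃))

theorem deriv_secondArg_eq_fderiv {F : ℝ → ℝ → ℝ → ℝ} {u v w : ℝ}
    (hF : DifferentiableAt ℝ ↿F (u, v, w)) :
    deriv (fun v => F u v w) v = fderiv ℝ ↿F (u, v, w) (0, 1, 0) :=
  (hasDerivAt_uncurry₃_comp hF (hasDerivAt_const v u) (hasDerivAt_id' v)
    (hasDerivAt_const v w)).deriv

theorem hasDerivAt_thirdArg {F : ℝ → ℝ → ℝ → ℝ} {u v w : ℝ}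
    (hF : DifferentiableAt ℝ ↿F (u, v, w)) :
    HasDerivAt (fun w => F u v w) (fderiv ℝ ↿F (u, v, w) (0, 0, 1)) w :=
  hasDerivAt_uncurry₃_comp hF (hasDerivAt_const w u) (hasDerivAt_const w v) (hasDerivAt_id' w)

theorem contDiff_deriv_thirdArg {F : ℝ → ℝ → ℝ → ℝ} {m n : WithTop ℕ∞} (hF : ContDiff ℝ n ↿F)
    (hmn : m + 1 ≤ n) :
    ContDiff ℝ m (fun q : ℝ × ℝ × ℝ => deriv (fun w => F q.1 q.2.1 w) q.2.2) := by
  have hF' : Differentiable ℝ ↿F := hF.differentiable (by rintro rfl; simp at hmn)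
  simp only [fun q : ℝ × ℝ × ℝ => (hasDerivAt_thirdArg (hF' q)).deriv]
  exact (hF.fderiv_right hmn).clm_apply contDiff_const

theorem ContDiffAt.hasDerivAt_deriv_comm {E : Type*} [NormedAddCommGroup E] [NormedSpace ℝ E]
    {f : ℝ → ℝ → E} {s₀ ε₀ : ℝ} (hf : ContDiffAt ℝ 2 ↿f (s₀, ε₀)) :
    HasDerivAt (fun ε => deriv (fun s => f s ε) s₀)
      (deriv (fun s => deriv (fun ε => f s ε) ε₀) s₀) ε₀ := by
  have horiz : ∀ s ε : ℝ, HasDerivAt (fun s => (s, ε)) ((1, 0) : ℝ × ℝ) s := fun s ε =>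
    (hasDerivAt_id' s).prodMk (hasDerivAt_const s ε)
  have vert : ∀ s ε : ℝ, HasDerivAt (fun ε => (s, ε)) ((0, 1) : ℝ × ℝ) ε := fun s ε =>
    (hasDerivAt_const ε s).prodMk (hasDerivAt_id' ε)
  have hdiff : ∀ᶠ p in 𝓝 (s₀, ε₀), DifferentiableAt ℝ ↿f p :=
    (hf.eventually (by simp)).mono fun p hp => hp.differentiableAt (by norm_num)
  have hf' : HasFDerivAt (fderiv ℝ ↿f) (fderiv ℝ (fderiv ℝ ↿f) (s₀, ε₀)) (s₀, ε₀) :=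
    ((hf.fderiv_right (m := 1) le_rfl).differentiableAt one_ne_zero).hasFDerivAt
  have h₁ : (fun ε => deriv (fun s => f s ε) s₀)
      =ᶠ[𝓝 ε₀] fun ε => fderiv ℝ ↿f (s₀, ε) (1, 0) := by
    filter_upwards [(vert s₀ ε₀).continuousAt.eventually hdiff] with ε hε
    exact (HasFDerivAt.comp_hasDerivAt (l := ↿f) s₀ hε.hasFDerivAt (horiz s₀ ε)).deriv
  have h₂ : (fun s => deriv (fun ε => f s ε) ε₀)
      =ᶠ[𝓝 s₀] fun s => fderiv ℝ ↿f (s, ε₀) (0, 1) := by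
    filter_upwards [(horiz s₀ ε₀).continuousAt.eventually hdiff] with s hs
    exact (HasFDerivAt.comp_hasDerivAt (l := ↿f) ε₀ hs.hasFDerivAt (vert s ε₀)).deriv
  have h₃ : HasDerivAt (fun ε => fderiv ℝ ↿f (s₀, ε) (1, 0))
      (fderiv ℝ (fderiv ℝ ↿f) (s₀, ε₀) (0, 1) (1, 0)) ε₀ := by
    simpa using (HasFDerivAt.comp_hasDerivAt (l := fderiv ℝ ↿f) ε₀ hf' (vert s₀ ε₀)).clm_apply
      (hasDerivAt_const ε₀ ((1, 0) : ℝ × ℝ))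
  have h₄ : HasDerivAt (fun s => fderiv ℝ ↿f (s, ε₀) (0, 1))
      (fderiv ℝ (fderiv ℝ ↿f) (s₀, ε₀) (1, 0) (0, 1)) s₀ := by
    simpa using (HasFDerivAt.comp_hasDerivAt (l := fderiv ℝ ↿f) s₀ hf' (horiz s₀ ε₀)).clm_apply
      (hasDerivAt_const s₀ ((0, 1) : ℝ × ℝ))
  rw [h₂.deriv_eq, h₄.deriv, hf.isSymmSndFDerivAt (by simp) (1, 0) (0, 1)]
  exact h₃.congr_of_eventuallyEq h₁

theorem eq_of_intervalIntegral_eq {f g : ℝ → ℝ} {c d t : ℝ} (ht : t ∈ Ioo c d)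
    (hf : ContinuousOn f (Icc c d)) (hg : ContinuousOn g (Icc c d))
    (h : ∀ u ∈ Ioo c d, ∫ s in c..u, f s = ∫ s in c..u, g s) : f t = g t := by
  have hasDerivAt_integral : ∀ k : ℝ → ℝ, ContinuousOn k (Icc c d) →
      HasDerivAt (fun u => ∫ s in c..u, k s) (k t) t := fun k hk =>
    intervalIntegral.integral_hasDerivAt_right
      ((hk.mono (Icc_subset_Icc_right ht.2.le)).intervalIntegrable_of_Icc ht.1.le)
      ((hk.mono Ioo_subset_Icc_self).stronglyMeasurableAtFilter isOpen_Ioo t ht)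
      (hk.continuousAt (Icc_mem_nhds ht.1 ht.2))
  exact (hasDerivAt_integral f hf).unique ((hasDerivAt_integral g hg).congr_of_eventuallyEq
    (eventually_of_mem (Ioo_mem_nhds ht.1 ht.2) h))

theorem constant_of_hasDerivAt_zero {f : ℝ → ℝ} {a b : ℝ} (hf : ContinuousOn f (Icc a b))
    (hf' : ∀ t ∈ Ioo a b, HasDerivAt f 0 t) : ∀ t ∈ Icc a b, f t = f a := by
  intro t ht
  rcases ht.1.eq_or_lt with rfl | hat
  · rfl
  obtain ⟨c, -, hslope⟩ := exists_hasDerivAt_eq_slope f (fun _ => 0) hat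
    (hf.mono (Icc_subset_Icc_right ht.2)) fun s hs => hf' s ⟨hs.1, hs.2.trans_le ht.2⟩
  rw [eq_comm, div_eq_zero_iff, sub_eq_zero] at hslope
  exact hslope.resolve_right (sub_ne_zero.2 hat.ne')

theorem lagrangian_eq_of_integral_eq {L : ℝ → ℝ → ℝ → ℝ} (hL : Continuous ↿L)
    {x φ ψ : ℝ → ℝ} {a b t : ℝ} (ht : t ∈ Ioo a b) (hx : ContDiffOn ℝ 1 x (Icc a b))
    (hφ : ContDiffOn ℝ 1 φ (Icc a b)) (hψ : ContDiffOn ℝ 1 ψ (Icc a b))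
    (hφt : derivWithin φ (Icc a b) t ≠ 0)
    (h : ∀ ta tb, a ≤ ta → ta ≤ tb → tb ≤ b →
      ∫ s in ta..tb, L s (x s) (derivWithin x (Icc a b) s)
        = ∫ s in ta..tb, L (φ s) (ψ s) (derivWithin ψ (Icc a b) s / derivWithin φ (Icc a b) s)
            * derivWithin φ (Icc a b) s) :
    L t (x t) (derivWithin x (Icc a b) t)
      = L (φ t) (ψ t) (derivWithin ψ (Icc a b) t / derivWithin φ (Icc a b) t)
          * derivWithin φ (Icc a b) t := by
  have hI : UniqueDiffOn ℝ (Icc a b) := uniqueDiffOn_Icc (ht.1.trans ht.2)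
  have hx' := hx.continuousOn_derivWithin hI le_rfl
  have hφ' := hφ.continuousOn_derivWithin hI le_rfl
  have hψ' := hψ.continuousOn_derivWithin hI le_rfl
  have hIt : Icc a b ∈ 𝓝 t := Icc_mem_nhds ht.1 ht.2
  -- Away from the zeros of `φ'` the quotient `ψ' / φ'` is continuous, not a junk value.
  obtain ⟨c, d, -, hcd, hsub⟩ := exists_Icc_mem_subset_of_mem_nhds
    (inter_mem ((hφ'.continuousAt hIt).eventually_ne hφt) hIt)
  have htcd : t ∈ Ioo c d := by rw [← interior_Icc]; exact mem_interior_iff_mem_nhds.2 hcd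
  have hJ : Icc c d ⊆ Icc a b := fun s hs => (hsub hs).2
  refine eq_of_intervalIntegral_eq htcd ?_ ?_ fun u hu =>
    h c u (hJ ⟨le_rfl, htcd.1.le.trans htcd.2.le⟩).1 hu.1.le (hJ ⟨hu.1.le, hu.2.le⟩).2
  · exact (hL.comp_continuousOn (continuousOn_id.prodMk (hx.continuousOn.prodMk hx'))).mono hJ
  · exact (hL.comp_continuousOn ((hφ.continuousOn.mono hJ).prodMk ((hψ.continuousOn.mono hJ).prodMk
      ((hψ'.mono hJ).div (hφ'.mono hJ) fun s hs => (hsub hs).1)))).mul (hφ'.mono hJ)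

theorem rund_trautman_identity {L : ℝ → ℝ → ℝ → ℝ} (hL : ContDiff ℝ 1 ↿L)
    {T X : ℝ → ℝ → ℝ} {Φ Ψ : ℝ → ℝ → ℝ → ℝ} (hΦ : ContDiff ℝ 2 ↿Φ) (hΨ : ContDiff ℝ 2 ↿Ψ)
    (hΦ0 : ∀ t u, Φ t u 0 = t) (hΨ0 : ∀ t u, Ψ t u 0 = u)
    (hΦT : ∀ t u, deriv (fun ε => Φ t u ε) 0 = T t u)
    (hΨX : ∀ t u, deriv (fun ε => Ψ t u ε) 0 = X t u)
    {x : ℝ → ℝ} {a b t : ℝ} (hx : ContDiffOn ℝ 2 x (Icc a b)) (ht : t ∈ Ioo a b)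
    (hinv : ∃ ε₀ > (0:ℝ), ∀ ε : ℝ, |ε| < ε₀ → ∀ ta tb, a ≤ ta → ta ≤ tb → tb ≤ b →
      ∫ s in ta..tb, L s (x s) (derivWithin x (Icc a b) s)
        = ∫ s in ta..tb, L (Φ s (x s) ε) (Ψ s (x s) ε)
            (derivWithin (fun r => Ψ r (x r) ε) (Icc a b) s
              / derivWithin (fun r => Φ r (x r) ε) (Icc a b) s)
            * derivWithin (fun r => Φ r (x r) ε) (Icc a b) s) :
    fderiv ℝ ↿L (t, x t, derivWithin x (Icc a b) t)
        (T t (x t), X t (x t), deriv (fun s => X s (x s)) t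
          - derivWithin x (Icc a b) t * deriv (fun s => T s (x s)) t)
      + L t (x t) (derivWithin x (Icc a b) t) * deriv (fun s => T s (x s)) t = 0 := by
  obtain ⟨ε₀, hε₀, hinv⟩ := hinv
  have hIt : Icc a b ∈ 𝓝 t := Icc_mem_nhds ht.1 ht.2
  have hx' : HasDerivAt x (derivWithin x (Icc a b) t) t :=
    (hx.differentiableOn two_ne_zero t (Ioo_subset_Icc_self ht)).hasDerivWithinAt.hasDerivAt hIt
  set v := derivWithin x (Icc a b) t
  set A : ℝ → ℝ := fun ε => deriv (fun s => Φ s (x s) ε) t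
  set B : ℝ → ℝ := fun ε => deriv (fun s => Ψ s (x s) ε) t
  have hcurve : ∀ {F : ℝ → ℝ → ℝ → ℝ}, ContDiff ℝ 2 ↿F →
      ContDiffAt ℝ 2 ↿(fun s ε => F s (x s) ε) (t, 0) := fun hF =>
    hF.contDiffAt.comp (t, 0) (contDiffAt_fst.prodMk
      (((hx.contDiffAt hIt).comp (t, 0) contDiffAt_fst).prodMk contDiffAt_snd))
  have hA : HasDerivAt A (deriv (fun s => T s (x s)) t) 0 := by
    simpa only [hΦT] using (hcurve hΦ).hasDerivAt_deriv_comm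
  have hB : HasDerivAt B (deriv (fun s => X s (x s)) t) 0 := by
    simpa only [hΨX] using (hcurve hΨ).hasDerivAt_deriv_comm
  have hA0 : A 0 = 1 := by simp only [A, hΦ0, deriv_id'']
  have hB0 : B 0 = v := by simp only [B, hΨ0, hx'.deriv]
  have hφ : HasDerivAt (fun ε => Φ t (x t) ε) (T t (x t)) 0 := by
    rw [← hΦT]
    exact (hasDerivAt_thirdArg (hΦ.differentiable two_ne_zero _)).differentiableAt.hasDerivAt
  have hψ : HasDerivAt (fun ε => Ψ t (x t) ε) (X t (x t)) 0 := by
    rw [← hΨX]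
    exact (hasDerivAt_thirdArg (hΨ.differentiable two_ne_zero _)).differentiableAt.hasDerivAt
  have hg := (hasDerivAt_uncurry₃_comp (hL.differentiable one_ne_zero _) hφ hψ
    (hB.div hA (by rw [hA0]; exact one_ne_zero))).mul hA
  simp only [Pi.div_apply, hΦ0, hΨ0, hA0, hB0, div_one, one_pow, mul_one] at hg
  have hconst : (fun ε => L (Φ t (x t) ε) (Ψ t (x t) ε) (B ε / A ε) * A ε)
      =ᶠ[𝓝 0] fun _ => L t (x t) v := by
    filter_upwards [hA.continuousAt.eventually_ne (by rw [hA0]; exact one_ne_zero),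
      Metric.ball_mem_nhds 0 hε₀] with ε hAε hε
    have hC1 : ∀ {F : ℝ → ℝ → ℝ → ℝ}, ContDiff ℝ 2 ↿F →
        ContDiffOn ℝ 1 (fun s => F s (x s) ε) (Icc a b) := fun hF =>
      (hF.comp_contDiffOn (contDiffOn_id.prodMk (hx.prodMk contDiffOn_const))).of_le one_le_two
    have h := lagrangian_eq_of_integral_eq hL.continuous ht (hx.of_le one_le_two) (hC1 hΦ)
      (hC1 hΨ) (by rwa [derivWithin_of_mem_nhds hIt]) (hinv ε (by simpa using hε))
    rw [derivWithin_of_mem_nhds (f := fun s => Φ s (x s) ε) hIt,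
      derivWithin_of_mem_nhds (f := fun s => Ψ s (x s) ε) hIt] at h
    exact h.symm
  exact hg.unique ((hasDerivAt_const 0 _).congr_of_eventuallyEq hconst)

noncomputable def noetherCharge (L : ℝ → ℝ → ℝ → ℝ) (T X : ℝ → ℝ → ℝ) (x : ℝ → ℝ) (s : Set ℝ)
    (t : ℝ) : ℝ :=
  deriv (fun v => L t (x t) v) (derivWithin x s t) * X t (x t)
    + (L t (x t) (derivWithin x s t)
        - deriv (fun v => L t (x t) v) (derivWithin x s t) * derivWithin x s t) * T t (x t)

theorem continuousOn_noetherCharge {L : ℝ → ℝ → ℝ → ℝ} (hL : ContDiff ℝ 1 ↿L)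
    {T X : ℝ → ℝ → ℝ} (hT : Continuous ↿T) (hX : Continuous ↿X) {x : ℝ → ℝ} {a b : ℝ}
    (hab : a < b) (hx : ContDiffOn ℝ 1 x (Icc a b)) :
    ContinuousOn (noetherCharge L T X x (Icc a b)) (Icc a b) := by
  have hv := hx.continuousOn_derivWithin (uniqueDiffOn_Icc hab) le_rfl
  have hγ := continuousOn_id.prodMk (hx.continuousOn.prodMk hv)
  have hLγ := hL.continuous.comp_continuousOn hγ
  have hL₃γ := (contDiff_deriv_thirdArg (m := 0) hL le_rfl).continuous.comp_continuousOn hγ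
  have hTx := hT.comp_continuousOn (continuousOn_id.prodMk hx.continuousOn)
  have hXx := hX.comp_continuousOn (continuousOn_id.prodMk hx.continuousOn)
  exact (hL₃γ.mul hXx).add ((hLγ.sub (hL₃γ.mul hv)).mul hTx)

theorem hasDerivAt_noetherCharge_zero {L : ℝ → ℝ → ℝ → ℝ} (hL : ContDiff ℝ 2 ↿L)
    {T X : ℝ → ℝ → ℝ} (hT : Differentiable ℝ ↿T) (hX : Differentiable ℝ ↿X) {x : ℝ → ℝ}
    {a b t : ℝ} (hx : ContDiffOn ℝ 2 x (Icc a b)) (ht : t ∈ Ioo a b)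
    (hEL : deriv (fun u => L t u (derivWithin x (Icc a b) t)) (x t)
      = derivWithin (fun s => deriv (fun v => L s (x s) v) (derivWithin x (Icc a b) s))
          (Icc a b) t)
    (hRT : fderiv ℝ ↿L (t, x t, derivWithin x (Icc a b) t)
        (T t (x t), X t (x t), deriv (fun s => X s (x s)) t
          - derivWithin x (Icc a b) t * deriv (fun s => T s (x s)) t)
      + L t (x t) (derivWithin x (Icc a b) t) * deriv (fun s => T s (x s)) t = 0) :
    HasDerivAt (noetherCharge L T X x (Icc a b)) 0 t := by
  set v := derivWithin x (Icc a b)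
  have hIt : Icc a b ∈ 𝓝 t := Icc_mem_nhds ht.1 ht.2
  have hLd : Differentiable ℝ ↿L := hL.differentiable two_ne_zero
  have hx' : HasDerivAt x (v t) t :=
    (hx.differentiableOn two_ne_zero t (Ioo_subset_Icc_self ht)).hasDerivWithinAt.hasDerivAt hIt
  have hv' : HasDerivAt v (deriv v t) t :=
    (((hx.derivWithin (uniqueDiffOn_Icc (ht.1.trans ht.2)) (m := 1) le_rfl).differentiableOn
      one_ne_zero t (Ioo_subset_Icc_self ht)).differentiableAt hIt).hasDerivAt
  have hγ : DifferentiableAt ℝ (fun s => (s, x s)) t :=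
    differentiableAt_id.prodMk hx'.differentiableAt
  have hTx : HasDerivAt (fun s => T s (x s)) (deriv (fun s => T s (x s)) t) t :=
    ((hT _).comp t hγ).hasDerivAt
  have hXx : HasDerivAt (fun s => X s (x s)) (deriv (fun s => X s (x s)) t) t :=
    ((hX _).comp t hγ).hasDerivAt
  have hLγ : HasDerivAt (fun s => L s (x s) (v s))
      (fderiv ℝ ↿L (t, x t, v t) (1, v t, deriv v t)) t :=
    hasDerivAt_uncurry₃_comp (hLd _) (hasDerivAt_id' t) hx' hv'
  have hL₃γ : HasDerivAt (fun s => deriv (fun w => L s (x s) w) (v s))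
      (fderiv ℝ ↿L (t, x t, v t) (0, 1, 0)) t := by
    rw [← deriv_secondArg_eq_fderiv (hLd _), hEL, derivWithin_of_mem_nhds hIt]
    exact (((contDiff_deriv_thirdArg (m := 1) hL le_rfl).differentiable one_ne_zero _).comp t
      (differentiableAt_id.prodMk (hx'.differentiableAt.prodMk hv'.differentiableAt))).hasDerivAt
  refine ((hL₃γ.mul hXx).add ((hLγ.sub (hL₃γ.mul hv')).mul hTx)).congr_deriv ?_
  simp only [Pi.sub_apply, Pi.mul_apply]
  rw [(hasDerivAt_thirdArg (hLd _)).deriv, ContinuousLinearMap.map_triple _ 1]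
  rw [ContinuousLinearMap.map_triple _ (T t (x t))] at hRT
  linear_combination hRT

/-- **Noether's theorem (classical).**
Suppose the functional `J[x] = ∫_a^b L(t,x(t),ẋ(t)) dt` is invariant under a
one-parameter family of transformations `t̄ = Φ(t,x,ε)`, `x̄ = Ψ(t,x,ε)`
reducing to the identity at `ε = 0`, with `C¹` infinitesimal generators
`T = ∂Φ/∂ε|₀` and `X = ∂Ψ/∂ε|₀` (so `t̄ = t + εT(t,x) + o(ε)`,
`x̄ = x + εX(t,x) + o(ε)`): for every subinterval `[t_a,t_b] ⊆ [a,b]`,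
`∫_{t_a}^{t_b} L(t,x(t),ẋ(t)) dt = ∫_{t̄(t_a)}^{t̄(t_b)} L(t̄,x̄(t̄),dx̄/dt̄) dt̄`
(written below after the change of variables `t̄ = Φ(t,x(t),ε)`).
Then along every `x ∈ C²([a,b],ℝ)` satisfying the Euler–Lagrange equation
`L_x(t,x(t),ẋ(t)) = d/dt [L_ẋ(t,x(t),ẋ(t))]`, the quantity
`∂L/∂ẋ·X(t,x(t)) + (L - ∂L/∂ẋ·ẋ(t))·T(t,x(t))` is constant on `[a,b]`. -/
theorem noether_theorem
    (a b : ℝ) (hab : a < b)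
    (L : ℝ → ℝ → ℝ → ℝ)
    (hL : ContDiff ℝ 2 (fun p : ℝ × ℝ × ℝ => L p.1 p.2.1 p.2.2))
    (T X : ℝ → ℝ → ℝ)
    (hT : ContDiff ℝ 1 (fun p : ℝ × ℝ => T p.1 p.2))
    (hX : ContDiff ℝ 1 (fun p : ℝ × ℝ => X p.1 p.2))
    (Φ Ψ : ℝ → ℝ → ℝ → ℝ)
    (hΦ : ContDiff ℝ 2 (fun p : ℝ × ℝ × ℝ => Φ p.1 p.2.1 p.2.2))
    (hΨ : ContDiff ℝ 2 (fun p : ℝ × ℝ × ℝ => Ψ p.1 p.2.1 p.2.2))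
    (hΦ0 : ∀ t u, Φ t u 0 = t) (hΨ0 : ∀ t u, Ψ t u 0 = u)
    (hΦT : ∀ t u, deriv (fun ε => Φ t u ε) 0 = T t u)
    (hΨX : ∀ t u, deriv (fun ε => Ψ t u ε) 0 = X t u)
    (hinv : ∀ x : ℝ → ℝ, ContDiffOn ℝ 2 x (Set.Icc a b) →
      ∃ ε₀ > (0:ℝ), ∀ ε : ℝ, |ε| < ε₀ → ∀ ta tb, a ≤ ta → ta ≤ tb → tb ≤ b →
        (∫ t in ta..tb, L t (x t) (derivWithin x (Set.Icc a b) t))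
          = ∫ t in ta..tb,
              L (Φ t (x t) ε) (Ψ t (x t) ε)
                (derivWithin (fun s => Ψ s (x s) ε) (Set.Icc a b) t
                  / derivWithin (fun s => Φ s (x s) ε) (Set.Icc a b) t)
              * derivWithin (fun s => Φ s (x s) ε) (Set.Icc a b) t) :
    ∀ x : ℝ → ℝ, ContDiffOn ℝ 2 x (Set.Icc a b) →
      (∀ t ∈ Set.Icc a b,
        deriv (fun u => L t u (derivWithin x (Set.Icc a b) t)) (x t)
          = derivWithin
              (fun s => deriv (fun v => L s (x s) v) (derivWithin x (Set.Icc a b) s))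
              (Set.Icc a b) t) →
      ∃ c : ℝ, ∀ t ∈ Set.Icc a b,
        deriv (fun v => L t (x t) v) (derivWithin x (Set.Icc a b) t) * X t (x t)
        + (L t (x t) (derivWithin x (Set.Icc a b) t)
            - deriv (fun v => L t (x t) v) (derivWithin x (Set.Icc a b) t)
                * derivWithin x (Set.Icc a b) t) * T t (x t)
        = c := by
  intro x hx hEL
  refine ⟨noetherCharge L T X x (Icc a b) a, constant_of_hasDerivAt_zero ?_ fun t ht => ?_⟩
  · exact continuousOn_noetherCharge (hL.of_le one_le_two) hT.continuous hX.continuous hab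
      (hx.of_le one_le_two)
  · exact hasDerivAt_noetherCharge_zero hL (hT.differentiable one_ne_zero)
      (hX.differentiable one_ne_zero) hx ht (hEL t (Ioo_subset_Icc_self ht))
      (rund_trautman_identity (hL.of_le one_le_two) hΦ hΨ hΦ0 hΨ0 hΦT hΨX hx ht (hinv x hx))
end

section
/- Let T, X : ℝ × ℝ → ℝ be C¹ functions of (t,x). The invariance identity for the Lagrangian L(t,x,v) = v², namely 2v ( ∂X/∂t (t,x) + v ∂X/∂x (t,x) − v ( ∂T/∂t (t,x) + v ∂T/∂x (t,x) ) ) + v² ( ∂T/∂t (t,x) + v ∂T/∂x (t,x) ) = 0, holds for all (t,x) ∈ ℝ × ℝ and all v ∈ ℝ if and only if there exist constants c, b₁, b₂ ∈ ℝ such that X(t,x) = c x + b₁ and T(t,x) = 2 c t + b₂ for all (t,x). -/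
/-!
Writing `Xₜ, Xₓ, Tₜ, Tₓ` for the partial derivatives, the left-hand side of the invariance
identity is the cubic `2 Xₜ v + (2 Xₓ - Tₜ) v² - Tₓ v³` in `v`. It vanishes identically iff
`Xₜ = 0`, `Tₓ = 0` and `2 Xₓ = Tₜ`. The first two make `X` a function of `x` alone and `T` a
function of `t` alone; the third then separates the variables, so both derivatives are constant.
-/

theorem eq_zero_of_forall_mul_add_mul_sq_add_mul_cube_eq_zero {K : Type*} [Field K] [CharZero K]
    {a b c : K} (h : ∀ v : K, a * v + b * v ^ 2 + c * v ^ 3 = 0) :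
    a = 0 ∧ b = 0 ∧ c = 0 := by
  have h₁ := h 1
  have h₂ := h (-1)
  have h₃ := h 2
  have hc : (6 : K) * c = 0 := by linear_combination h₃ - 3 * h₁ - h₂
  have hc : c = 0 := (mul_eq_zero.1 hc).resolve_left (by norm_num)
  subst hc
  exact ⟨by linear_combination (h₁ - h₂) / 2, by linear_combination (h₁ + h₂) / 2, rfl⟩

theorem forall_square_lagrangian_invariance_iff {Xt Xx Tt Tx : ℝ} :
    (∀ v : ℝ, 2 * v * ((Xt + v * Xx) - v * (Tt + v * Tx)) + v ^ 2 * (Tt + v * Tx) = 0) ↔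
      Xt = 0 ∧ Tx = 0 ∧ 2 * Xx = Tt := by
  constructor
  · intro h
    obtain ⟨hXt, hXx, hTx⟩ := eq_zero_of_forall_mul_add_mul_sq_add_mul_cube_eq_zero
      (a := 2 * Xt) (b := 2 * Xx - Tt) (c := -Tx) fun v => by linear_combination h v
    exact ⟨by linarith, by linarith, by linarith⟩
  · rintro ⟨rfl, rfl, rfl⟩ v
    ring

section Curry

variable {𝕜 E F G : Type*} [NontriviallyNormedField 𝕜] [NormedAddCommGroup E] [NormedSpace 𝕜 E]
  [NormedAddCommGroup F] [NormedSpace 𝕜 F] [NormedAddCommGroup G] [NormedSpace 𝕜 G]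
  {f : E → F → G}

theorem Differentiable.curry_left (hf : Differentiable 𝕜 fun p : E × F => f p.1 p.2) (y : F) :
    Differentiable 𝕜 fun x => f x y :=
  hf.comp (differentiable_id.prodMk (differentiable_const y))

theorem Differentiable.curry_right (hf : Differentiable 𝕜 fun p : E × F => f p.1 p.2) (x : E) :
    Differentiable 𝕜 fun y => f x y :=
  hf.comp ((differentiable_const x).prodMk differentiable_id)

end Curry

theorem eq_mul_add_of_deriv_eq {𝕜 : Type*} [RCLike 𝕜] {f : 𝕜 → 𝕜} {c : 𝕜}
    (hf : Differentiable 𝕜 f) (hf' : ∀ x, deriv f x = c) (x : 𝕜) : f x = c * x + f 0 := by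
  refine isOpen_univ.eqOn_of_deriv_eq isPreconnected_univ hf.differentiableOn
    (g := fun x => c * x + f 0) (by fun_prop) (fun y _ => ?_) (Set.mem_univ 0) (by simp)
    (Set.mem_univ x)
  simp [hf']

theorem exists_affine_of_two_mul_deriv_eq {f g : ℝ → ℝ} (hf : Differentiable ℝ f)
    (hg : Differentiable ℝ g) (h : ∀ x t, 2 * deriv f x = deriv g t) :
    ∃ c, (∀ x, f x = c * x + f 0) ∧ ∀ t, g t = 2 * c * t + g 0 := by
  have hf' : ∀ x, deriv f x = deriv f 0 := fun x => by linarith [h x 0, h 0 0]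
  have hg' : ∀ t, deriv g t = 2 * deriv f 0 := fun t => (h 0 t).symm
  exact ⟨deriv f 0, eq_mul_add_of_deriv_eq hf hf', eq_mul_add_of_deriv_eq hg hg'⟩

/-- For the Lagrangian `L(t,x,v) = v²`, the necessary condition of invariance
`2v(Ẋ - vṪ) + v²Ṫ = 0`, with `Ṫ = ∂T/∂t + v ∂T/∂x` and `Ẋ = ∂X/∂t + v ∂X/∂x`,
holds for all `(t,x) ∈ ℝ × ℝ` and all `v ∈ ℝ` if and only if there are
constants `c, b₁, b₂ ∈ ℝ` with `X(t,x) = c x + b₁` and `T(t,x) = 2 c t + b₂`. -/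
theorem invariance_generators_of_square_lagrangian
    (T X : ℝ → ℝ → ℝ)
    (hT : ContDiff ℝ 1 (fun p : ℝ × ℝ => T p.1 p.2))
    (hX : ContDiff ℝ 1 (fun p : ℝ × ℝ => X p.1 p.2)) :
    (∀ t x v : ℝ,
        2 * v * ((deriv (fun s => X s x) t + v * deriv (fun y => X t y) x)
            - v * (deriv (fun s => T s x) t + v * deriv (fun y => T t y) x))
          + v ^ 2 * (deriv (fun s => T s x) t + v * deriv (fun y => T t y) x) = 0)
    ↔ ∃ c b₁ b₂ : ℝ, (∀ t x : ℝ, X t x = c * x + b₁)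
        ∧ (∀ t x : ℝ, T t x = 2 * c * t + b₂) := by
  simp only [forall_square_lagrangian_invariance_iff]
  constructor
  · intro H
    have hXd := hX.differentiable one_ne_zero
    have hTd := hT.differentiable one_ne_zero
    have hX_indep_t : ∀ t x, X t x = X 0 x := fun t x =>
      is_const_of_deriv_eq_zero (hXd.curry_left x) (fun s => (H s x).1) t 0
    have hT_indep_x : ∀ t x, T t x = T t 0 := fun t x =>
      is_const_of_deriv_eq_zero (hTd.curry_right t) (fun y => (H t y).2.1) x 0
    have hsep : ∀ x t, 2 * deriv (X 0) x = deriv (T · 0) t := fun x t => by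
      simpa only [funext (hX_indep_t t), funext fun s => hT_indep_x s x] using (H t x).2.2
    obtain ⟨c, hXc, hTc⟩ :=
      exists_affine_of_two_mul_deriv_eq (hXd.curry_right 0) (hTd.curry_left 0) hsep
    exact ⟨c, X 0 0, T 0 0, fun t x => (hX_indep_t t x).trans (hXc x),
      fun t x => (hT_indep_x t x).trans (hTc t)⟩
  · rintro ⟨c, b₁, b₂, hXc, hTc⟩ t x
    simp [hXc, hTc]
end
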